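/- arXiv:1304.0845 — 5 statements merged into one kernel-verified Lean document; each statement's English description precedes it below -/
import Mathlib

section
/- In the setting of the adversary-matrix construction, if α_0 ≥ 0 and α_1, …, α_{n−k} are arbitrary reals, then ‖Γ̃‖ ≥ α_0 · √(C(n,k)), where C(n,k) is the binomial coefficient n choose k. -/
/-!
Test `Γ̃` against the all-ones vector `𝟙`. As `e_0` is proportional to `𝟙` and orthogonal to
the other `e_v`, the projector `E_m` kills `𝟙` for `m ≠ 0` and fixes it for `m = 0`; hence every
row of `Γ̃` sums to `α_0 q^{(k-d)/2}`. There are `C(n,k) q^d q^{n-k}` rows (one factor `q^d` per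
orthogonal array) and `‖𝟙‖² = q^n`, so `‖Γ̃ 𝟙‖ = α_0 √C(n,k) ‖𝟙‖`.
-/

open scoped BigOperators

/-- `T ⊆ X^ι` is an orthogonal array of strength `d` and index `1`. -/
def IsOA {X ι : Type*} [Fintype X] [Fintype ι] (d : ℕ) (T : Finset (ι → X)) : Prop :=
  T.card = Fintype.card X ^ d ∧
    ∀ D : Finset ι, D.card = d → ∀ y : ι → X, ∃! x, x ∈ T ∧ ∀ i ∈ D, x i = y i

/-- The weight of a tuple: the number of its nonzero entries. -/
def wt {q : ℕ} {ι : Type*} [Fintype ι] (v : ι → Fin q) : ℕ :=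
  (Finset.univ.filter fun i => (v i).val ≠ 0).card

/-- Entries of the orthogonal projector `E^{(ι)}_j` onto the span of the basis tensors
`e_{v_1} ⊗ ⋯ ⊗ e_{v_m}` of weight `j`. -/
noncomputable def Eproj {q : ℕ} {ι : Type*} [Fintype ι] [DecidableEq ι]
    (e : Fin q → Fin q → ℝ) (j : ℕ) : Matrix (ι → Fin q) (ι → Fin q) ℝ :=
  fun x y => ∑ v ∈ Finset.univ.filter (fun v : ι → Fin q => wt v = j),
    (∏ i, e (v i) (x i)) * (∏ i, e (v i) (y i))

/-- The spectral norm (largest singular value) of a real matrix. -/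
noncomputable def specNorm {m l : Type*} [Fintype m] [Fintype l] [DecidableEq l]
    (A : Matrix m l ℝ) : ℝ :=
  ‖LinearMap.toContinuousLinearMap (Matrix.toEuclideanLin A)‖

/-- Restriction `x_S` of a string to a set of coordinates. -/
def restrict {n q : ℕ} (x : Fin n → Fin q) (S : Finset (Fin n)) :
    {i // i ∈ S} → Fin q := fun i => x i.1

/-- Row index set of the matrix `Γ̃`: pairs `(x, S)` of an input and a `k`-subset with
`x_S ∈ T_S`. -/
abbrev Rows (q n k : ℕ) (T : (S : Finset (Fin n)) → Finset ({i // i ∈ S} → Fin q)) :=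
  {p : (Fin n → Fin q) × Finset (Fin n) // p.2.card = k ∧ restrict p.1 p.2 ∈ T p.2}

/-- The matrix `Γ̃`, the stacking of the blocks `G̃_S = Σ_m α_m F_S ⊗ E^{(n-k)}_m`. -/
noncomputable def Gam {q n : ℕ} (k d : ℕ)
    (T : (S : Finset (Fin n)) → Finset ({i // i ∈ S} → Fin q))
    (e : Fin q → Fin q → ℝ) (α : ℕ → ℝ) :
    Matrix (Rows q n k T) (Fin n → Fin q) ℝ :=
  fun p y =>
    ∑ m ∈ Finset.range (n - k + 1),
      α m *
        (Real.sqrt ((q : ℝ) ^ (k - d)) *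
          ∑ j ∈ Finset.range (d + 1), Eproj e j (restrict p.1.1 p.1.2) (restrict y p.1.2)) *
        Eproj e m (restrict p.1.1 p.1.2ᶜ) (restrict y p.1.2ᶜ)

lemma norm_toLp_mulVec_le_specNorm_mul {m l : Type*} [Fintype m] [Fintype l] [DecidableEq l]
    (A : Matrix m l ℝ) (v : l → ℝ) :
    ‖WithLp.toLp 2 (A.mulVec v)‖ ≤ specNorm A * ‖WithLp.toLp 2 v‖ :=
  (LinearMap.toContinuousLinearMap (Matrix.toEuclideanLin A)).le_opNorm (WithLp.toLp 2 v)

lemma norm_toLp_const {ι : Type*} [Fintype ι] {c : ℝ} (hc : 0 ≤ c) :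
    ‖WithLp.toLp 2 (fun _ : ι => c)‖ = c * √(Fintype.card ι) := by
  simp [EuclideanSpace.norm_eq, Real.sqrt_sq hc, mul_comm]

lemma mul_sqrt_card_le_specNorm_mul_of_sum_row_eq {m l : Type*} [Fintype m] [Fintype l]
    [DecidableEq l] (A : Matrix m l ℝ) {c : ℝ} (hc : 0 ≤ c) (hA : ∀ i, ∑ j, A i j = c) :
    c * √(Fintype.card m) ≤ specNorm A * √(Fintype.card l) := by
  have hA1 : A.mulVec (fun _ => 1) = fun _ => c := funext fun i => by
    simpa [Matrix.mulVec, dotProduct] using hA i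
  simpa [hA1, norm_toLp_const hc, norm_toLp_const zero_le_one] using
    norm_toLp_mulVec_le_specNorm_mul A (fun _ => 1)

lemma sum_mul_restrict_compl {n q : ℕ} {M : Type*} [CommSemiring M] (S : Finset (Fin n))
    (f : ({i // i ∈ S} → Fin q) → M) (g : ({i // i ∈ Sᶜ} → Fin q) → M) :
    ∑ x : Fin n → Fin q, f (restrict x S) * g (restrict x Sᶜ) = (∑ a, f a) * ∑ b, g b := by
  rw [Fintype.sum_mul_sum, ← Fintype.sum_prod_type']
  let split : (Fin n → Fin q) ≃ ({i // i ∈ S} → Fin q) × ({i // i ∈ Sᶜ} → Fin q) :=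
    (Equiv.piEquivPiSubtypeProd (· ∈ S) _).trans <| Equiv.prodCongr (Equiv.refl _) <|
      Equiv.piCongrLeft' _ (Equiv.subtypeEquivRight fun _ => Finset.mem_compl.symm)
  exact Fintype.sum_equiv split _ _ fun _ => rfl

section OrthonormalBasis

variable {q : ℕ} [NeZero q] {e : Fin q → Fin q → ℝ}
  (he : ∀ i j : Fin q, ∑ x, e i x * e j x = if i = j then 1 else 0)
  (he0 : ∀ x : Fin q, e 0 x = 1 / Real.sqrt q)
include he he0

lemma sum_orthonormal_apply_eq_ite (w : Fin q) : ∑ t, e w t = if w = 0 then √q else 0 := by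
  have hq : (0 : ℝ) < √q := Real.sqrt_pos.mpr (Nat.cast_pos.mpr (NeZero.pos q))
  have h := he w 0
  simp only [he0, mul_one_div, ← Finset.sum_div, div_eq_iff hq.ne'] at h
  simp [h]

lemma sum_prod_orthonormal_apply_eq_ite {ι : Type*} [Fintype ι] [DecidableEq ι]
    (v : ι → Fin q) :
    ∑ y : ι → Fin q, ∏ i, e (v i) (y i) = if v = 0 then √q ^ Fintype.card ι else 0 := by
  rw [← Fintype.prod_sum]
  simp_rw [sum_orthonormal_apply_eq_ite he he0, Finset.prod_ite_zero, Finset.prod_const,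
    funext_iff]
  simp

lemma sum_Eproj_apply {ι : Type*} [Fintype ι] [DecidableEq ι] (j : ℕ) (x : ι → Fin q) :
    ∑ y, Eproj e j x y = if j = 0 then 1 else 0 := by
  have hq : (0 : ℝ) < √q := Real.sqrt_pos.mpr (Nat.cast_pos.mpr (NeZero.pos q))
  unfold Eproj
  rw [Finset.sum_comm]
  simp_rw [← Finset.mul_sum, sum_prod_orthonormal_apply_eq_ite he he0, mul_ite, mul_zero,
    Finset.sum_ite_eq', Finset.mem_filter]
  simp [wt, he0, eq_comm, inv_mul_cancel₀ (pow_pos hq _).ne']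

end OrthonormalBasis

lemma sum_Gam_apply {q n : ℕ} [NeZero q] (k d : ℕ)
    (T : (S : Finset (Fin n)) → Finset ({i // i ∈ S} → Fin q)) {e : Fin q → Fin q → ℝ}
    (he : ∀ i j : Fin q, ∑ x, e i x * e j x = if i = j then 1 else 0)
    (he0 : ∀ x : Fin q, e 0 x = 1 / Real.sqrt q) (α : ℕ → ℝ) (p : Rows q n k T) :
    ∑ y, Gam k d T e α p y = α 0 * √((q : ℝ) ^ (k - d)) := by
  obtain ⟨⟨x, S⟩, -⟩ := p
  unfold Gam
  rw [Finset.sum_comm]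
  refine (Finset.sum_congr rfl fun m _ => sum_mul_restrict_compl S
    (fun a => α m * (√((q : ℝ) ^ (k - d)) *
      ∑ j ∈ Finset.range (d + 1), Eproj e j (restrict x S) a))
    (Eproj e m (restrict x Sᶜ))).trans ?_
  simp_rw [← Finset.mul_sum]
  rw [Finset.sum_comm]
  simp [sum_Eproj_apply he he0]

lemma card_filter_restrict_mem {n q : ℕ} (S : Finset (Fin n))
    (U : Finset ({i // i ∈ S} → Fin q)) :
    (Finset.univ.filter fun x : Fin n → Fin q => restrict x S ∈ U).card =
      U.card * q ^ (n - S.card) := by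
  rw [Finset.card_filter]
  simpa [Finset.card_compl] using
    sum_mul_restrict_compl (M := ℕ) S (fun a => if a ∈ U then 1 else 0) (fun _ => 1)

lemma card_Rows {q n : ℕ} (k d : ℕ) (T : (S : Finset (Fin n)) → Finset ({i // i ∈ S} → Fin q))
    (hT : ∀ S : Finset (Fin n), S.card = k → (T S).card = q ^ d) :
    Fintype.card (Rows q n k T) = n.choose k * (q ^ d * q ^ (n - k)) := by
  let toSigma : Rows q n k T ≃
      Σ S : {S : Finset (Fin n) // S.card = k}, {x : Fin n → Fin q // restrict x S.1 ∈ T S.1} :=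
    { toFun := fun p => ⟨⟨p.1.2, p.2.1⟩, ⟨p.1.1, p.2.2⟩⟩
      invFun := fun s => ⟨(s.2.1, s.1.1), s.1.2, s.2.2⟩ }
  rw [Fintype.card_congr toSigma, Fintype.card_sigma]
  simp_rw [Fintype.card_subtype, card_filter_restrict_mem]
  rw [Finset.sum_congr rfl fun S _ => by rw [hT S.1 S.2, S.2], Finset.sum_const, smul_eq_mul,
    Finset.card_univ, Fintype.card_finset_len, Fintype.card_fin]

theorem gamma_norm_lower_bound_general
    {q n k d : ℕ} [NeZero q] (hd : d + 1 ≤ k) (hn : k ≤ n)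
    (e : Fin q → Fin q → ℝ)
    (he : ∀ i j : Fin q, ∑ x, e i x * e j x = if i = j then 1 else 0)
    (he0 : ∀ x : Fin q, e 0 x = 1 / Real.sqrt q)
    (T : (S : Finset (Fin n)) → Finset ({i // i ∈ S} → Fin q))
    (hT : ∀ S : Finset (Fin n), S.card = k → IsOA d (T S))
    (α : ℕ → ℝ) (hα : 0 ≤ α 0) :
    α 0 * Real.sqrt (n.choose k) ≤ specNorm (Gam k d T e α) := by
  have hrows : Fintype.card (Rows q n k T) = n.choose k * (q ^ d * q ^ (n - k)) :=
    card_Rows k d T fun S hS => by simpa using (hT S hS).1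
  have hbound := mul_sqrt_card_le_specNorm_mul_of_sum_row_eq (Gam k d T e α)
    (by positivity) (sum_Gam_apply k d T he he0 α)
  have hexp : (q : ℝ) ^ (k - d) * (q ^ d * q ^ (n - k)) = q ^ n := by
    rw [← pow_add, ← pow_add]; congr 1; omega
  have hqn : 0 < √((q : ℝ) ^ n) := by
    have := NeZero.pos q
    positivity
  refine le_of_mul_le_mul_right ?_ hqn
  calc α 0 * √(n.choose k) * √((q : ℝ) ^ n)
      = α 0 * √((q : ℝ) ^ (k - d)) * √(Fintype.card (Rows q n k T)) := by
        rw [hrows, ← hexp]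
        push_cast
        rw [Real.sqrt_mul (Nat.cast_nonneg _), Real.sqrt_mul (by positivity)]
        ring
    _ ≤ specNorm (Gam k d T e α) * √((q : ℝ) ^ n) := by simpa using hbound

/-- Lemma 2(a) of the paper: in the setting of the adversary-matrix
construction, if `α 0 ≥ 0`, then `‖Γ̃‖ ≥ α 0 · √(C(n,k))`. -/
theorem gamma_norm_lower_bound
    {q n k d : ℕ} [NeZero q] (hq : 2 ≤ q) (hk : 1 ≤ k) (hd : d + 1 ≤ k) (hn : k ≤ n)
    (e : Fin q → Fin q → ℝ)
    (he : ∀ i j : Fin q, ∑ x, e i x * e j x = if i = j then 1 else 0)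
    (he0 : ∀ x : Fin q, e 0 x = 1 / Real.sqrt q)
    (T : (S : Finset (Fin n)) → Finset ({i // i ∈ S} → Fin q))
    (hT : ∀ S : Finset (Fin n), S.card = k → IsOA d (T S))
    (α : ℕ → ℝ) (hα : 0 ≤ α 0) :
    α 0 * Real.sqrt (n.choose k) ≤ specNorm (Gam k d T e α) :=
  gamma_norm_lower_bound_general hd hn e he he0 T hT α hα
end

section
/- In the setting of the adversary-matrix construction, for arbitrary real coefficients α_0, …, α_{n−k}, one has ‖Γ̃‖ ≤ C(k,d) · √(C(n,k)) · max_{0≤m≤n−k} |α_m|, where C(k,d) and C(n,k) are binomial coefficients. -/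
open scoped BigOperators

/-!
In the tensor basis `ê_v = e_{v_1} ⊗ ⋯ ⊗ e_{v_n}` the row `(x, S)` of `Γ̃ y` reads
`∑_{v : wt v_S ≤ d} α_{wt v_{Sᶜ}} ⟨ê_v, y⟩ · q^{(k-d)/2} ê_v(x)`.
Assign to every such `v` a `d`-set `D ⊇ supp v_S`. Since `T_S` is an orthogonal array of
strength `d`, the vectors `q^{(k-d)/2} ê_v`, restricted to the rows of the block `S`, are
orthonormal within each fibre of this assignment, so by the triangle inequality the block `S`
has norm at most `C(k,d) · max |α_m|`. The `C(n,k)` blocks are stacked, and Parseval for `ê`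
finishes the bound.
-/

open Finset hiding restrict

theorem sum_sq_sum_le_sq_sum_sqrt {κ β : Type*} (s : Finset κ) (t : Finset β)
    (h : κ → β → ℝ) :
    ∑ b ∈ t, (∑ p ∈ s, h p b) ^ 2 ≤ (∑ p ∈ s, √(∑ b ∈ t, h p b ^ 2)) ^ 2 := by
  calc ∑ b ∈ t, (∑ p ∈ s, h p b) ^ 2 = ∑ p ∈ s, ∑ p' ∈ s, ∑ b ∈ t, h p b * h p' b := by
        simp_rw [sq, sum_mul_sum]
        rw [sum_comm]
        exact sum_congr rfl fun _ _ => sum_comm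
    _ ≤ ∑ p ∈ s, ∑ p' ∈ s, √(∑ b ∈ t, h p b ^ 2) * √(∑ b ∈ t, h p' b ^ 2) := by
        gcongr
        exact Real.sum_mul_le_sqrt_mul_sqrt t _ _
    _ = (∑ p ∈ s, √(∑ b ∈ t, h p b ^ 2)) ^ 2 := by rw [sq, sum_mul_sum]

theorem sum_sq_sum_mul_of_orthonormal {κ β : Type*} [DecidableEq κ] (A : Finset κ)
    (t : Finset β) (φ : κ → β → ℝ)
    (hφ : ∀ p ∈ A, ∀ p' ∈ A, ∑ b ∈ t, φ p b * φ p' b = if p = p' then 1 else 0) (c : κ → ℝ) :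
    ∑ b ∈ t, (∑ p ∈ A, c p * φ p b) ^ 2 = ∑ p ∈ A, c p ^ 2 := by
  calc ∑ b ∈ t, (∑ p ∈ A, c p * φ p b) ^ 2
      = ∑ p ∈ A, ∑ p' ∈ A, c p * c p' * ∑ b ∈ t, φ p b * φ p' b := by
        simp_rw [sq, sum_mul_sum, mul_sum]
        rw [sum_comm]
        refine sum_congr rfl fun p _ => ?_
        rw [sum_comm]
        exact sum_congr rfl fun p' _ => sum_congr rfl fun b _ => by ring
    _ = ∑ p ∈ A, c p ^ 2 := by
        refine sum_congr rfl fun p hp => ?_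
        simp_rw +contextual [hφ p hp _ _, mul_ite, mul_one, mul_zero, sum_ite_eq, hp, if_true, sq]

theorem sum_sq_sum_mul_le_of_fiberwise_orthonormal {κ ι β : Type*} [DecidableEq κ]
    [DecidableEq ι] (A : Finset κ) (𝒟 : Finset ι) (g : κ → ι) (hg : ∀ p ∈ A, g p ∈ 𝒟)
    (t : Finset β) (φ : κ → β → ℝ)
    (hφ : ∀ p ∈ A, ∀ p' ∈ A, g p = g p' →
      ∑ b ∈ t, φ p b * φ p' b = if p = p' then 1 else 0) (c : κ → ℝ) :
    ∑ b ∈ t, (∑ p ∈ A, c p * φ p b) ^ 2 ≤ (#𝒟 : ℝ) ^ 2 * ∑ p ∈ A, c p ^ 2 := by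
  have fiber_orthonormal (D : ι) : ∀ p ∈ A.filter (g · = D), ∀ p' ∈ A.filter (g · = D),
      ∑ b ∈ t, φ p b * φ p' b = if p = p' then 1 else 0 := by
    intro p hp p' hp'
    rw [mem_filter] at hp hp'
    exact hφ p hp.1 p' hp'.1 (hp.2.trans hp'.2.symm)
  calc ∑ b ∈ t, (∑ p ∈ A, c p * φ p b) ^ 2
      = ∑ b ∈ t, (∑ D ∈ 𝒟, ∑ p ∈ A.filter (g · = D), c p * φ p b) ^ 2 := by
        simp_rw [sum_fiberwise_of_maps_to hg]
    _ ≤ (∑ D ∈ 𝒟, √(∑ b ∈ t, (∑ p ∈ A.filter (g · = D), c p * φ p b) ^ 2)) ^ 2 :=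
        sum_sq_sum_le_sq_sum_sqrt _ _ _
    _ = (∑ D ∈ 𝒟, √(∑ p ∈ A.filter (g · = D), c p ^ 2)) ^ 2 := by
        simp_rw [sum_sq_sum_mul_of_orthonormal _ t φ (fiber_orthonormal _)]
    _ ≤ (∑ _D ∈ 𝒟, √(∑ p ∈ A, c p ^ 2)) ^ 2 := by
        gcongr with D
        exact filter_subset _ _
    _ = (#𝒟 : ℝ) ^ 2 * ∑ p ∈ A, c p ^ 2 := by
        rw [sum_const, nsmul_eq_mul, mul_pow, Real.sq_sqrt (by positivity)]

theorem sum_sq_mul_le_of_abs_le {κ : Type*} [Fintype κ] (A : Finset κ) {a c : κ → ℝ} {M : ℝ}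
    (ha : ∀ p ∈ A, |a p| ≤ M) : ∑ p ∈ A, (a p * c p) ^ 2 ≤ M ^ 2 * ∑ p, c p ^ 2 := by
  rw [mul_sum]
  refine (sum_le_sum fun p hp => ?_).trans
    (sum_le_sum_of_subset_of_nonneg (subset_univ A) fun p _ _ => by positivity)
  rw [mul_pow, ← sq_abs (a p)]
  gcongr
  exact ha p hp

theorem specNorm_le_of_sum_sq_le {m l : Type*} [Fintype m] [Fintype l] [DecidableEq l]
    (A : Matrix m l ℝ) {C : ℝ} (hC : 0 ≤ C)
    (h : ∀ y : l → ℝ, ∑ i, (∑ j, A i j * y j) ^ 2 ≤ C ^ 2 * ∑ j, y j ^ 2) :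
    specNorm A ≤ C := by
  refine ContinuousLinearMap.opNorm_le_bound _ hC fun y => ?_
  rw [LinearMap.coe_toContinuousLinearMap', EuclideanSpace.norm_eq, EuclideanSpace.norm_eq,
    ← Real.sqrt_sq hC, ← Real.sqrt_mul (sq_nonneg C)]
  simp only [Real.norm_eq_abs, sq_abs]
  exact Real.sqrt_le_sqrt (h y)

theorem sum_prod_mul_prod_of_orthonormal {ι α β : Type*} [Fintype ι] [DecidableEq ι]
    [DecidableEq α] [Fintype β] {f : α → β → ℝ}
    (hf : ∀ a a', ∑ b, f a b * f a' b = if a = a' then 1 else 0) (v v' : ι → α) :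
    ∑ x : ι → β, (∏ i, f (v i) (x i)) * ∏ i, f (v' i) (x i) = if v = v' then 1 else 0 := by
  simp_rw [← prod_mul_distrib]
  rw [← Fintype.prod_sum fun i b => f (v i) b * f (v' i) b]
  simp [hf, prod_boole, funext_iff]

theorem sum_mul_eq_ite_of_orthonormal_rows {α : Type*} [Fintype α] [DecidableEq α]
    {f : α → α → ℝ} (hf : ∀ a a', ∑ b, f a b * f a' b = if a = a' then 1 else 0) (b b' : α) :
    ∑ a, f a b * f a b' = if b = b' then 1 else 0 := by
  have h : Matrix.of f * (Matrix.of f).transpose = 1 := by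
    ext a a'
    simpa [Matrix.mul_apply, Matrix.one_apply] using hf a a'
  have h' : (Matrix.of f).transpose * Matrix.of f = 1 := mul_eq_one_comm.mp h
  simpa [Matrix.mul_apply, Matrix.one_apply] using congrFun (congrFun h' b) b'

theorem IsOA.sum_comp_restrict {X ι M : Type*} [Fintype X] [Nonempty X] [Fintype ι]
    [DecidableEq ι] [AddCommMonoid M] {d : ℕ} {T : Finset (ι → X)} (hT : IsOA d T) {D : Finset ι}
    (hD : #D = d) (g : (D → X) → M) :
    ∑ t ∈ T, g (D.restrict t) = ∑ z, g z := by
  refine sum_nbij D.restrict (fun _ _ => mem_univ _) ?_ ?_ fun _ _ => rfl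
  · intro t ht t' ht' h
    exact (hT.2 D hD t).unique ⟨ht, fun _ _ => rfl⟩
      ⟨ht', fun i hi => (congrFun h ⟨i, hi⟩).symm⟩
  · intro z _
    obtain ⟨t, ⟨ht, hty⟩, -⟩ :=
      hT.2 D hD fun i => if h : i ∈ D then z ⟨i, h⟩ else Classical.arbitrary X
    exact ⟨t, ht, funext fun i => by simp [Finset.restrict, hty i i.2]⟩

section BasisTensor

variable {q : ℕ} {ι : Type*} [Fintype ι]

/-- The basis tensor `e_{v_1} ⊗ ⋯ ⊗ e_{v_m}`, as a function of the point `x`. -/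
def basisTensor (e : Fin q → Fin q → ℝ) (v x : ι → Fin q) : ℝ := ∏ i, e (v i) (x i)

variable [DecidableEq ι] {e : Fin q → Fin q → ℝ}

theorem sum_basisTensor_mul_basisTensor
    (he : ∀ i j : Fin q, ∑ x, e i x * e j x = if i = j then 1 else 0) (v v' : ι → Fin q) :
    ∑ x, basisTensor e v x * basisTensor e v' x = if v = v' then 1 else 0 :=
  sum_prod_mul_prod_of_orthonormal he v v'

theorem sum_sq_sum_basisTensor_mul
    (he : ∀ i j : Fin q, ∑ x, e i x * e j x = if i = j then 1 else 0) (y : (ι → Fin q) → ℝ) :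
    ∑ v, (∑ z, basisTensor e v z * y z) ^ 2 = ∑ z, y z ^ 2 := by
  have hdual (z z' : ι → Fin q) :
      ∑ v, basisTensor e v z * basisTensor e v z' = if z = z' then 1 else 0 :=
    sum_prod_mul_prod_of_orthonormal (f := fun a b => e b a)
      (sum_mul_eq_ite_of_orthonormal_rows he) z z'
  simp_rw [mul_comm (basisTensor e _ _) (y _)]
  exact sum_sq_sum_mul_of_orthonormal _ _ (fun z v => basisTensor e v z)
    (fun z _ z' _ => hdual z z') y

theorem basisTensor_eq_of_support_subset [NeZero q]
    (he0 : ∀ x : Fin q, e 0 x = 1 / √q) {D : Finset ι} {u : ι → Fin q}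
    (hu : ∀ i, u i ≠ 0 → i ∈ D) (x : ι → Fin q) :
    basisTensor e u x = basisTensor e (D.restrict u) (D.restrict x) * (√q)⁻¹ ^ #Dᶜ := by
  have hu0 : ∀ i ∈ Dᶜ, e (u i) (x i) = (√q)⁻¹ := fun i hi => by
    rw [not_imp_comm.mp (hu i) (mem_compl.mp hi), he0, one_div]
  rw [basisTensor, ← prod_mul_prod_compl D, prod_congr rfl hu0, prod_const, basisTensor,
    ← prod_coe_sort D]
  rfl

theorem IsOA.sum_basisTensor_mul_basisTensor [NeZero q]
    (he : ∀ i j : Fin q, ∑ x, e i x * e j x = if i = j then 1 else 0)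
    (he0 : ∀ x : Fin q, e 0 x = 1 / √q) {d : ℕ} {T : Finset (ι → Fin q)} (hT : IsOA d T)
    {D : Finset ι} (hD : #D = d) {u u' : ι → Fin q} (hu : ∀ i, u i ≠ 0 → i ∈ D)
    (hu' : ∀ i, u' i ≠ 0 → i ∈ D) :
    ∑ t ∈ T, basisTensor e u t * basisTensor e u' t
      = if u = u' then ((q : ℝ) ^ (Fintype.card ι - d))⁻¹ else 0 := by
  have restrict_inj : D.restrict u = D.restrict u' ↔ u = u' := by
    refine ⟨fun h => funext fun i => ?_, fun h => h ▸ rfl⟩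
    by_cases hi : i ∈ D
    · exact congrFun h ⟨i, hi⟩
    · rw [not_imp_comm.mp (hu i) hi, not_imp_comm.mp (hu' i) hi]
  have hscale : ((√q)⁻¹ ^ #Dᶜ) ^ 2 = ((q : ℝ) ^ (Fintype.card ι - d))⁻¹ := by
    rw [← pow_mul, mul_comm, pow_mul, inv_pow, Real.sq_sqrt (Nat.cast_nonneg q), inv_pow,
      card_compl, hD]
  calc ∑ t ∈ T, basisTensor e u t * basisTensor e u' t
      = ((√q)⁻¹ ^ #Dᶜ) ^ 2 *
          ∑ t ∈ T, basisTensor e (D.restrict u) (D.restrict t) *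
            basisTensor e (D.restrict u') (D.restrict t) := by
        simp_rw [basisTensor_eq_of_support_subset he0 hu,
          basisTensor_eq_of_support_subset he0 hu', mul_sum]
        exact sum_congr rfl fun _ _ => by ring
    _ = if u = u' then ((q : ℝ) ^ (Fintype.card ι - d))⁻¹ else 0 := by
        rw [hT.sum_comp_restrict hD (fun z => basisTensor e (D.restrict u) z *
            basisTensor e (D.restrict u') z), _root_.sum_basisTensor_mul_basisTensor he]
        simp only [restrict_inj, hscale, mul_ite, mul_one, mul_zero]

end BasisTensor

section Weight

variable {q : ℕ} {ι : Type*} [Fintype ι]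

theorem wt_le_card (v : ι → Fin q) : wt v ≤ Fintype.card ι :=
  card_filter_le _ _

theorem exists_card_eq_support_subset [NeZero q] {d : ℕ} {u : ι → Fin q} (hu : wt u ≤ d)
    (hd : d ≤ Fintype.card ι) : ∃ D : Finset ι, #D = d ∧ ∀ i, u i ≠ 0 → i ∈ D := by
  obtain ⟨D, hsupp, -, hD⟩ := exists_subsuperset_card_eq (subset_univ _) hu hd
  exact ⟨D, hD, fun i hi => hsupp (mem_filter.mpr ⟨mem_univ i, Fin.val_ne_zero_iff.mpr hi⟩)⟩

theorem sum_mul_Eproj [DecidableEq ι] (e : Fin q → Fin q → ℝ) (s : Finset ℕ) (β : ℕ → ℝ)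
    (a b : ι → Fin q) :
    ∑ m ∈ s, β m * Eproj e m a b
      = ∑ w ∈ univ.filter (wt · ∈ s), β (wt w) * (basisTensor e w a * basisTensor e w b) := by
  rw [← sum_fiberwise_of_maps_to (g := wt) fun w hw => (mem_filter.mp hw).2]
  refine sum_congr rfl fun m hm => ?_
  rw [Eproj, mul_sum, filter_filter]
  refine sum_congr (filter_congr fun w _ => ?_) fun w hw => ?_
  · exact ⟨fun h => ⟨h ▸ hm, h⟩, And.right⟩
  · rw [(mem_filter.mp hw).2.2, basisTensor, basisTensor]

end Weight

section Restrict

variable {n q : ℕ}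

def restrictEquiv (S : Finset (Fin n)) :
    (Fin n → Fin q) ≃ ({i // i ∈ S} → Fin q) × ({i // i ∈ Sᶜ} → Fin q) where
  toFun x := (restrict x S, restrict x Sᶜ)
  invFun p i := if h : i ∈ S then p.1 ⟨i, h⟩ else p.2 ⟨i, mem_compl.mpr h⟩
  left_inv x := funext fun i => by by_cases h : i ∈ S <;> simp [restrict, h]
  right_inv p := by
    ext i
    · simp [restrict, i.2]
    · simp [restrict, mem_compl.mp i.2]

theorem basisTensor_restrict_mul_restrict_compl (e : Fin q → Fin q → ℝ) (S : Finset (Fin n))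
    (v x : Fin n → Fin q) :
    basisTensor e (restrict v S) (restrict x S) * basisTensor e (restrict v Sᶜ) (restrict x Sᶜ)
      = basisTensor e v x := by
  simp only [basisTensor, restrict]
  rw [prod_coe_sort S fun i => e (v i) (x i), prod_coe_sort Sᶜ fun i => e (v i) (x i)]
  exact prod_mul_prod_compl S _

theorem sum_filter_restrict_mem_mul (S : Finset (Fin n)) (P : Finset ({i // i ∈ S} → Fin q))
    (f : ({i // i ∈ S} → Fin q) → ℝ) (g : ({i // i ∈ Sᶜ} → Fin q) → ℝ) :
    ∑ x ∈ univ.filter (restrict · S ∈ P), f (restrict x S) * g (restrict x Sᶜ)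
      = (∑ a ∈ P, f a) * ∑ b, g b := by
  rw [sum_filter, sum_mul_sum]
  refine ((restrictEquiv S).sum_comp fun p => if p.1 ∈ P then f p.1 * g p.2 else 0).trans ?_
  simp [Fintype.sum_prod_type]

end Restrict

section Adversary

variable {q n k d : ℕ} {e : Fin q → Fin q → ℝ}
  {T : (S : Finset (Fin n)) → Finset ({i // i ∈ S} → Fin q)}

theorem Gam_apply (α : ℕ → ℝ) (p : Rows q n k T) (z : Fin n → Fin q) :
    Gam k d T e α p z = √((q : ℝ) ^ (k - d)) *
      ∑ v ∈ univ.filter (fun v => wt (restrict v p.1.2) ≤ d),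
        α (wt (restrict v p.1.2ᶜ)) * (basisTensor e v p.1.1 * basisTensor e v z) := by
  obtain ⟨⟨x, S⟩, hS, hx⟩ := p
  dsimp only
  have hweights : univ.filter (fun w : {i // i ∈ Sᶜ} → Fin q => wt w ∈ range (n - k + 1))
      = univ := by
    refine filter_true_of_mem fun w _ => mem_range.mpr (Nat.lt_succ_of_le ?_)
    simpa [card_compl, hS] using wt_le_card w
  calc Gam k d T e α ⟨(x, S), hS, hx⟩ z
      = √((q : ℝ) ^ (k - d)) *
          ((∑ j ∈ range (d + 1), 1 * Eproj e j (restrict x S) (restrict z S)) *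
            ∑ m ∈ range (n - k + 1), α m * Eproj e m (restrict x Sᶜ) (restrict z Sᶜ)) := by
        simp only [Gam, one_mul]
        conv_rhs => rw [← mul_assoc, mul_sum]
        exact sum_congr rfl fun m _ => by ring
    _ = √((q : ℝ) ^ (k - d)) *
          ((∑ u ∈ univ.filter (wt · ∈ range (d + 1)),
              1 * (basisTensor e u (restrict x S) * basisTensor e u (restrict z S))) *
            ∑ w, α (wt w) *
              (basisTensor e w (restrict x Sᶜ) * basisTensor e w (restrict z Sᶜ))) := by
        rw [sum_mul_Eproj, sum_mul_Eproj, hweights]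
    _ = _ := by
        rw [← sum_filter_restrict_mem_mul]
        refine congrArg _ (sum_congr (filter_congr fun v _ => ?_) fun v _ => ?_)
        · simp
        · rw [← basisTensor_restrict_mul_restrict_compl e S v x,
            ← basisTensor_restrict_mul_restrict_compl e S v z]
          ring

theorem sum_rows {M : Type*} [AddCommMonoid M] (f : (Fin n → Fin q) → Finset (Fin n) → M) :
    ∑ p : Rows q n k T, f p.1.1 p.1.2
      = ∑ S ∈ powersetCard k univ, ∑ x ∈ univ.filter (restrict · S ∈ T S), f x S := by
  rw [← sum_subtype (univ.filter fun r : (Fin n → Fin q) × Finset (Fin n) =>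
      #r.2 = k ∧ restrict r.1 r.2 ∈ T r.2) (by simp) fun r => f r.1 r.2,
    sum_filter, Fintype.sum_prod_type, sum_comm, powersetCard_eq_filter, powerset_univ,
    sum_filter]
  simp [sum_filter, ite_and, sum_ite_irrel]

theorem sum_sq_sum_mul_basisTensor_le [NeZero q]
    (he : ∀ i j : Fin q, ∑ x, e i x * e j x = if i = j then 1 else 0)
    (he0 : ∀ x : Fin q, e 0 x = 1 / √q) {S : Finset (Fin n)} (hS : #S = k) (hd : d ≤ k)
    {P : Finset ({i // i ∈ S} → Fin q)} (hP : IsOA d P) (c : (Fin n → Fin q) → ℝ) :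
    ∑ x ∈ univ.filter (restrict · S ∈ P),
        (∑ v ∈ univ.filter (fun v => wt (restrict v S) ≤ d),
          c v * (√((q : ℝ) ^ (k - d)) * basisTensor e v x)) ^ 2
      ≤ (k.choose d : ℝ) ^ 2 * ∑ v ∈ univ.filter (fun v => wt (restrict v S) ≤ d), c v ^ 2 := by
  have hcardS : Fintype.card {i // i ∈ S} = k := by simp [hS]
  have hsupp : ∀ v ∈ univ.filter (fun v : Fin n → Fin q => wt (restrict v S) ≤ d),
      ∃ D ∈ powersetCard d (univ : Finset {i // i ∈ S}), ∀ i, restrict v S i ≠ 0 → i ∈ D := by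
    intro v hv
    obtain ⟨D, hD, hvD⟩ := exists_card_eq_support_subset (mem_filter.mp hv).2 (hcardS ▸ hd)
    exact ⟨D, mem_powersetCard.mpr ⟨subset_univ D, hD⟩, hvD⟩
  choose! D hD hvD using hsupp
  have key := sum_sq_sum_mul_le_of_fiberwise_orthonormal _ _ D hD (univ.filter (restrict · S ∈ P))
    (fun v x => √((q : ℝ) ^ (k - d)) * basisTensor e v x) ?_ c
  · rwa [card_powersetCard, card_univ, hcardS] at key
  intro v hv v' hv' hDv
  have hsq : √((q : ℝ) ^ (k - d)) * √((q : ℝ) ^ (k - d)) = (q : ℝ) ^ (k - d) :=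
    Real.mul_self_sqrt (by positivity)
  have hv_eq : v = v' ↔ restrict v S = restrict v' S ∧ restrict v Sᶜ = restrict v' Sᶜ :=
    (restrictEquiv S).injective.eq_iff.symm.trans Prod.ext_iff
  calc ∑ x ∈ univ.filter (restrict · S ∈ P),
        √((q : ℝ) ^ (k - d)) * basisTensor e v x * (√((q : ℝ) ^ (k - d)) * basisTensor e v' x)
      = (√((q : ℝ) ^ (k - d)) * √((q : ℝ) ^ (k - d))) * ∑ x ∈ univ.filter (restrict · S ∈ P),
          (basisTensor e (restrict v S) (restrict x S) *
              basisTensor e (restrict v' S) (restrict x S)) *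
            (basisTensor e (restrict v Sᶜ) (restrict x Sᶜ) *
              basisTensor e (restrict v' Sᶜ) (restrict x Sᶜ)) := by
        rw [mul_sum]
        refine sum_congr rfl fun x _ => ?_
        rw [← basisTensor_restrict_mul_restrict_compl e S v x,
          ← basisTensor_restrict_mul_restrict_compl e S v' x]
        ring
    _ = if v = v' then 1 else 0 := by
        rw [hsq, sum_filter_restrict_mem_mul S P
            (fun a => basisTensor e (restrict v S) a * basisTensor e (restrict v' S) a)
            (fun b => basisTensor e (restrict v Sᶜ) b * basisTensor e (restrict v' Sᶜ) b),
          sum_basisTensor_mul_basisTensor he,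
          hP.sum_basisTensor_mul_basisTensor he he0 (mem_powersetCard.mp (hD v hv)).2 (hvD v hv)
            (hDv ▸ hvD v' hv'), hcardS]
        simp only [hv_eq, ite_and]
        split_ifs <;> simp

theorem sum_Gam_mul (α : ℕ → ℝ) (p : Rows q n k T) (y : (Fin n → Fin q) → ℝ) :
    ∑ z, Gam k d T e α p z * y z
      = ∑ v ∈ univ.filter (fun v => wt (restrict v p.1.2) ≤ d),
          (α (wt (restrict v p.1.2ᶜ)) * ∑ z, basisTensor e v z * y z) *
            (√((q : ℝ) ^ (k - d)) * basisTensor e v p.1.1) := by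
  simp_rw [Gam_apply, mul_sum, sum_mul]
  rw [sum_comm]
  exact sum_congr rfl fun v _ => sum_congr rfl fun z _ => by ring

end Adversary

theorem gamma_norm_upper_bound_general
    {q n k d : ℕ} [NeZero q] (hd : d + 1 ≤ k)
    (e : Fin q → Fin q → ℝ)
    (he : ∀ i j : Fin q, ∑ x, e i x * e j x = if i = j then 1 else 0)
    (he0 : ∀ x : Fin q, e 0 x = 1 / Real.sqrt q)
    (T : (S : Finset (Fin n)) → Finset ({i // i ∈ S} → Fin q))
    (hT : ∀ S : Finset (Fin n), S.card = k → IsOA d (T S))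
    (α : ℕ → ℝ) :
    specNorm (Gam k d T e α) ≤
      (k.choose d : ℝ) * Real.sqrt (n.choose k) *
        (Finset.range (n - k + 1)).sup' Finset.nonempty_range_add_one (fun m => |α m|) := by
  set M := (range (n - k + 1)).sup' nonempty_range_add_one fun m => |α m|
  have hM : ∀ m ≤ n - k, |α m| ≤ M := fun m hm =>
    le_sup' (fun m => |α m|) (mem_range_succ_iff.mpr hm)
  have hM0 : 0 ≤ M := (abs_nonneg _).trans (hM 0 (Nat.zero_le _))
  refine specNorm_le_of_sum_sq_le _ (by positivity) fun y => ?_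
  set c := fun v : Fin n → Fin q => ∑ z, basisTensor e v z * y z
  have hblock : ∀ S ∈ powersetCard k univ, ∑ x ∈ univ.filter (restrict · S ∈ T S),
      (∑ v ∈ univ.filter (fun v => wt (restrict v S) ≤ d),
        (α (wt (restrict v Sᶜ)) * c v) * (√((q : ℝ) ^ (k - d)) * basisTensor e v x)) ^ 2
      ≤ (k.choose d : ℝ) ^ 2 * (M ^ 2 * ∑ v, c v ^ 2) := by
    intro S hS
    have hS : #S = k := (mem_powersetCard.mp hS).2
    refine (sum_sq_sum_mul_basisTensor_le he he0 hS (by omega) (hT S hS) _).trans ?_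
    gcongr
    exact sum_sq_mul_le_of_abs_le _ fun v _ =>
      hM _ (by simpa [card_compl, hS] using wt_le_card (restrict v Sᶜ))
  calc ∑ p : Rows q n k T, (∑ z, Gam k d T e α p z * y z) ^ 2
      ≤ ∑ _S ∈ powersetCard k univ, (k.choose d : ℝ) ^ 2 * (M ^ 2 * ∑ v, c v ^ 2) := by
        simp_rw [sum_Gam_mul]
        exact (sum_rows _).trans_le (sum_le_sum hblock)
    _ = ((k.choose d : ℝ) * √(n.choose k) * M) ^ 2 * ∑ z, y z ^ 2 := by
        rw [sum_const, card_powersetCard, card_univ, Fintype.card_fin, nsmul_eq_mul,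
          sum_sq_sum_basisTensor_mul he, mul_pow, mul_pow, Real.sq_sqrt (Nat.cast_nonneg _)]
        ring

/-- Lemma 2(b) of the paper: in the setting of the adversary-matrix
construction, `‖Γ̃‖ ≤ C(k,d) · √(C(n,k)) · max_{0 ≤ m ≤ n-k} |α_m|`. -/
theorem gamma_norm_upper_bound
    {q n k d : ℕ} [NeZero q] (hq : 2 ≤ q) (hk : 1 ≤ k) (hd : d + 1 ≤ k) (hn : k ≤ n)
    (e : Fin q → Fin q → ℝ)
    (he : ∀ i j : Fin q, ∑ x, e i x * e j x = if i = j then 1 else 0)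
    (he0 : ∀ x : Fin q, e 0 x = 1 / Real.sqrt q)
    (T : (S : Finset (Fin n)) → Finset ({i // i ∈ S} → Fin q))
    (hT : ∀ S : Finset (Fin n), S.card = k → IsOA d (T S))
    (α : ℕ → ℝ) :
    specNorm (Gam k d T e α) ≤
      (k.choose d : ℝ) * Real.sqrt (n.choose k) *
        (Finset.range (n - k + 1)).sup' Finset.nonempty_range_add_one (fun m => |α m|) :=
  gamma_norm_upper_bound_general hd e he he0 T hT α
end

section
/- In the setting of the adversary-matrix construction with the modified matrix Γ̃_1, for arbitrary real coefficients α_0, …, α_{n−k} (with α_{n−k+1} := 0), the matrices Γ̃ and Γ̃_1 agree on every entry whose row label (x,S) (with x_S ∈ T_S) and column label y ∈ X^n satisfy x_1 ≠ y_1. -/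
open scoped BigOperators

/-- The modified matrix `Γ̃₁`, the stacking of the blocks `(G̃_S)₁`: for `i₀ ∈ S`,
`(G̃_S)₁ = Σ_m α_m (F_S)₁ ⊗ E^{(n-k)}_m` where `(F_S)₁` is `q^{(k-d)/2}` times the
`T_S`-row submatrix of `E_0 ⊗ E^{(k-1)}_d` (with `E_0 = e₀e₀*` on coordinate `i₀`);
for `i₀ ∉ S`, `(G̃_S)₁ = Σ_m (α_m - α_{m+1}) F_S ⊗ E_0 ⊗ E^{(n-k-1)}_m`. -/
noncomputable def Gam1 {q n : ℕ} [NeZero q] (k d : ℕ) (i₀ : Fin n)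
    (T : (S : Finset (Fin n)) → Finset ({i // i ∈ S} → Fin q))
    (e : Fin q → Fin q → ℝ) (α : ℕ → ℝ) :
    Matrix (Rows q n k T) (Fin n → Fin q) ℝ :=
  fun p y =>
    if i₀ ∈ p.1.2 then
      ∑ m ∈ Finset.range (n - k + 1),
        α m *
          (Real.sqrt ((q : ℝ) ^ (k - d)) * (e 0 (p.1.1 i₀) * e 0 (y i₀)) *
            Eproj e d (restrict p.1.1 (p.1.2.erase i₀)) (restrict y (p.1.2.erase i₀))) *
          Eproj e m (restrict p.1.1 p.1.2ᶜ) (restrict y p.1.2ᶜ)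
    else
      ∑ m ∈ Finset.range (n - k + 1),
        (α m - α (m + 1)) *
          (Real.sqrt ((q : ℝ) ^ (k - d)) *
            ∑ j ∈ Finset.range (d + 1), Eproj e j (restrict p.1.1 p.1.2) (restrict y p.1.2)) *
          ((e 0 (p.1.1 i₀) * e 0 (y i₀)) *
            Eproj e m (restrict p.1.1 (insert i₀ p.1.2)ᶜ) (restrict y (insert i₀ p.1.2)ᶜ))

/-!
The columns of the orthogonal matrix `e` are orthonormal as well, so `x₁ ≠ y₁` gives
`∑_{c ≠ 0} e_c(x₁) e_c(y₁) = -P` with `P = e_0(x₁) e_0(y₁)`. Splitting coordinate `1` off the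
projector entries then yields `E_j(x, y) = P E'_j(x, y) - P E'_{j-1}(x, y)`, with `E'` the
projectors on the remaining coordinates. If `1 ∈ S`, the sum `Σ_{j ≤ d} E_j` of the `F_S` factor
telescopes to `P E'_d`; if `1 ∉ S`, summation by parts in `m`, using `α_{n-k+1} = 0`, turns
`Σ_m α_m E_m` into `Σ_m (α_m - α_{m+1}) P E'_m`.
-/

lemma sum_mul_eq_ite_of_orthonormal_rows_s4 {q : ℕ} {e : Fin q → Fin q → ℝ}
    (he : ∀ i j : Fin q, ∑ x, e i x * e j x = if i = j then 1 else 0) (s t : Fin q) :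
    ∑ c, e c s * e c t = if s = t then 1 else 0 := by
  have hrows : Matrix.of e * (Matrix.of e).transpose = 1 := by
    ext i j
    simpa [Matrix.mul_apply, Matrix.one_apply] using he i j
  have hcols : (Matrix.of e).transpose * Matrix.of e = 1 := mul_eq_one_comm.mp hrows
  simpa [Matrix.mul_apply, Matrix.one_apply] using congrFun₂ hcols s t

section Weight

variable {q : ℕ} {κ ι : Type*} [Fintype κ] [Fintype ι]

lemma wt_comp_equiv (σ : κ ≃ ι) (v : ι → Fin q) : wt (v ∘ σ) = wt v := by
  simp only [wt, Finset.card_filter, Function.comp_apply,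
    σ.sum_comp fun i => if (v i).val ≠ 0 then 1 else 0]

lemma wt_option [NeZero q] (v : Option κ → Fin q) :
    wt v = (if v none = 0 then 0 else 1) + wt (v ∘ some) := by
  simp only [wt, Finset.card_filter, Fintype.sum_option, Fin.val_ne_zero_iff, ite_not,
    Function.comp_apply]

end Weight

section Eproj

variable {q : ℕ} {κ ι : Type*} [Fintype κ] [DecidableEq κ] [Fintype ι] [DecidableEq ι]
  (e : Fin q → Fin q → ℝ)

lemma Eproj_comp_equiv (j : ℕ) (σ : κ ≃ ι) (x y : ι → Fin q) :
    Eproj e j (x ∘ σ) (y ∘ σ) = Eproj e j x y := by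
  simp only [Eproj, Finset.sum_filter]
  rw [← (σ.arrowCongr (Equiv.refl (Fin q))).sum_comp]
  refine Finset.sum_congr rfl fun v _ => ?_
  have hv : σ.arrowCongr (Equiv.refl (Fin q)) v = v ∘ σ.symm := rfl
  have hprod (z : ι → Fin q) : ∏ i, e ((v ∘ σ.symm) i) (z i) = ∏ i, e (v i) ((z ∘ σ) i) := by
    rw [← σ.prod_comp]
    simp
  rw [hv, ← wt_comp_equiv σ, hprod, hprod, Function.comp_assoc, σ.symm_comp_self,
    Function.comp_id]

variable [NeZero q]

lemma Eproj_option (j : ℕ) (x y : Option κ → Fin q) :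
    Eproj e j x y =
      e 0 (x none) * e 0 (y none) * Eproj e j (x ∘ some) (y ∘ some) +
        (∑ c ∈ Finset.univ.erase 0, e c (x none) * e c (y none)) *
          (if j = 0 then 0 else Eproj e (j - 1) (x ∘ some) (y ∘ some)) := by
  simp only [Eproj, Finset.sum_filter, Finset.mul_sum]
  rw [← Equiv.piOptionEquivProd.symm.sum_comp, Fintype.sum_prod_type,
    ← Finset.add_sum_erase _ _ (Finset.mem_univ 0)]
  simp only [wt_option, Fintype.prod_option, Equiv.piOptionEquivProd_symm_apply,
    Function.comp_def]
  congr 1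
  · refine Finset.sum_congr rfl fun w _ => ?_
    simp only [if_true, zero_add]
    split_ifs <;> ring
  · rcases j with _ | j
    · rw [if_pos rfl, mul_zero]
      refine Finset.sum_eq_zero fun c hc => Finset.sum_eq_zero fun w _ => ?_
      simp [Finset.ne_of_mem_erase hc]
    · rw [if_neg j.succ_ne_zero, Nat.add_sub_cancel, Finset.sum_mul]
      refine Finset.sum_congr rfl fun c hc => ?_
      rw [Finset.mul_sum]
      refine Finset.sum_congr rfl fun w _ => ?_
      simp only [if_neg (Finset.ne_of_mem_erase hc), add_comm 1, Nat.add_right_cancel_iff]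
      split_ifs <;> ring

lemma Eproj_option_of_orthogonal (x y : Option κ → Fin q)
    (h : ∑ c, e c (x none) * e c (y none) = 0) (j : ℕ) :
    Eproj e j x y = e 0 (x none) * e 0 (y none) * Eproj e j (x ∘ some) (y ∘ some) -
      if j = 0 then 0 else e 0 (x none) * e 0 (y none) * Eproj e (j - 1) (x ∘ some) (y ∘ some) := by
  have hrest : ∑ c ∈ Finset.univ.erase 0, e c (x none) * e c (y none) =
      -(e 0 (x none) * e 0 (y none)) := by
    linarith [Finset.add_sum_erase Finset.univ (fun c => e c (x none) * e c (y none))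
      (Finset.mem_univ 0)]
  rw [Eproj_option, hrest]
  split_ifs <;> ring

end Eproj

/-- Chosen so that `restrict x S ∘ optionEraseEquiv ha` is definitionally `x a` at `none` and
`restrict x (S.erase a)` on `some`. -/
def optionEraseEquiv {α : Type*} [DecidableEq α] {S : Finset α} {a : α} (ha : a ∈ S) :
    Option {i // i ∈ S.erase a} ≃ {i // i ∈ S} :=
  ((Equiv.subtypeEquivRight fun i => by rw [Finset.insert_erase ha]).trans
    (Finset.subtypeInsertEquivOption (S.notMem_erase a))).symm

section Restrict

variable {q n : ℕ} [NeZero q] (e : Fin q → Fin q → ℝ) {S : Finset (Fin n)} {a : Fin n}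
  (x y : Fin n → Fin q)

lemma Eproj_restrict_of_orthogonal (ha : a ∈ S) (h : ∑ c, e c (x a) * e c (y a) = 0) (j : ℕ) :
    Eproj e j (restrict x S) (restrict y S) =
      e 0 (x a) * e 0 (y a) * Eproj e j (restrict x (S.erase a)) (restrict y (S.erase a)) -
        if j = 0 then 0 else
          e 0 (x a) * e 0 (y a) * Eproj e (j - 1) (restrict x (S.erase a)) (restrict y (S.erase a)) := by
  rw [← Eproj_comp_equiv e j (optionEraseEquiv ha)]
  exact Eproj_option_of_orthogonal e _ _ h j

lemma sum_range_Eproj_restrict_of_orthogonal (ha : a ∈ S) (h : ∑ c, e c (x a) * e c (y a) = 0)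
    (d : ℕ) :
    ∑ j ∈ Finset.range (d + 1), Eproj e j (restrict x S) (restrict y S) =
      e 0 (x a) * e 0 (y a) * Eproj e d (restrict x (S.erase a)) (restrict y (S.erase a)) := by
  induction d with
  | zero => simp [Eproj_restrict_of_orthogonal e x y ha h]
  | succ d ih =>
    rw [Finset.sum_range_succ, ih, Eproj_restrict_of_orthogonal e x y ha h, if_neg d.succ_ne_zero,
      Nat.add_sub_cancel]
    ring

end Restrict

section SummationByParts

variable {R : Type*} [CommRing R]

lemma sum_range_mul_sub_prev (α β : ℕ → R) (N : ℕ) :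
    ∑ m ∈ Finset.range (N + 1), α m * (β m - if m = 0 then 0 else β (m - 1)) =
      ∑ m ∈ Finset.range (N + 1), (α m - α (m + 1)) * β m + α (N + 1) * β N := by
  induction N with
  | zero => simp; ring
  | succ N ih =>
    rw [Finset.sum_range_succ, ih, Finset.sum_range_succ _ (N + 1), if_neg N.succ_ne_zero,
      Nat.add_sub_cancel]
    ring

lemma sum_range_mul_mul_sub_prev_of_eq_zero {α β : ℕ → R} {N : ℕ} (hα : α (N + 1) = 0) {c : R} :
    ∑ m ∈ Finset.range (N + 1), α m * c * (β m - if m = 0 then 0 else β (m - 1)) =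
      ∑ m ∈ Finset.range (N + 1), (α m - α (m + 1)) * c * β m := by
  calc _ = ∑ m ∈ Finset.range (N + 1), α m * (c * β m - if m = 0 then 0 else c * β (m - 1)) :=
        Finset.sum_congr rfl fun m _ => by split_ifs <;> ring
    _ = _ := by
      rw [sum_range_mul_sub_prev, hα, zero_mul, add_zero]
      exact Finset.sum_congr rfl fun m _ => by ring

end SummationByParts

/-- Coordinate `1` of `[n]` is `⟨0, _⟩ : Fin n`. -/
theorem gamma_eq_gamma1_off_diagonal
    {q n k d : ℕ} [NeZero q] (hk : 1 ≤ k) (hn : k ≤ n)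
    (e : Fin q → Fin q → ℝ)
    (he : ∀ i j : Fin q, ∑ x, e i x * e j x = if i = j then 1 else 0)
    (T : (S : Finset (Fin n)) → Finset ({i // i ∈ S} → Fin q))
    (α : ℕ → ℝ) (hlast : α (n - k + 1) = 0) :
    ∀ (p : Rows q n k T) (y : Fin n → Fin q),
      p.1.1 ⟨0, by omega⟩ ≠ y ⟨0, by omega⟩ →
      Gam k d T e α p y = Gam1 k d ⟨0, by omega⟩ T e α p y := by
  intro p y hne
  obtain ⟨⟨x, S⟩, _⟩ := p
  set i₀ : Fin n := ⟨0, by omega⟩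
  have horth : ∑ c, e c (x i₀) * e c (y i₀) = 0 := by
    rw [sum_mul_eq_ite_of_orthonormal_rows_s4 he, if_neg hne]
  simp only [Gam, Gam1]
  split_ifs with hmem
  · refine Finset.sum_congr rfl fun m _ => ?_
    rw [sum_range_Eproj_restrict_of_orthogonal e x y hmem horth]
    ring
  · rw [Finset.compl_insert]
    simp only [Eproj_restrict_of_orthogonal e x y (Finset.mem_compl.2 hmem) horth]
    exact sum_range_mul_mul_sub_prev_of_eq_zero hlast
end

section
/- Let A be a real matrix with rows indexed by a finite set R and columns by a finite set C, let φ : R → [q] and ψ : C → [q] be arbitrary labelings, and let B be the matrix with B[r,c] = A[r,c] whenever φ(r) ≠ ψ(c) and B[r,c] = 0 whenever φ(r) = ψ(c). Then ‖B‖ ≤ 2‖A‖, where ‖·‖ denotes the spectral norm. -/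
open scoped Matrix.Norms.L2Operator

theorem specNorm_eq_l2_opNorm {m l : Type*} [Fintype m] [Fintype l] [DecidableEq l]
    (A : Matrix m l ℝ) : specNorm A = ‖A‖ :=
  rfl

section Pinching

variable {𝕜 R C ι : Type*} [RCLike 𝕜] [DecidableEq ι]

def EuclideanSpace.restrictLabel (ψ : C → ι) (i : ι) (x : EuclideanSpace 𝕜 C) :
    EuclideanSpace 𝕜 C :=
  WithLp.toLp 2 fun c => if ψ c = i then x c else 0

theorem EuclideanSpace.sum_norm_sq_restrictLabel [Fintype C] [Fintype ι] (ψ : C → ι)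
    (x : EuclideanSpace 𝕜 C) :
    ∑ i, ‖x.restrictLabel ψ i‖ ^ 2 = ‖x‖ ^ 2 := by
  simp only [EuclideanSpace.norm_sq_eq, EuclideanSpace.restrictLabel, apply_ite (‖·‖ ^ 2),
    norm_zero, ne_eq, OfNat.ofNat_ne_zero, not_false_eq_true, zero_pow]
  rw [Finset.sum_comm]
  simp

namespace Matrix

def pinching (φ : R → ι) (ψ : C → ι) (A : Matrix R C 𝕜) : Matrix R C 𝕜 :=
  of fun r c => if φ r = ψ c then A r c else 0

theorem pinching_mulVec_apply [Fintype C] (φ : R → ι) (ψ : C → ι) (A : Matrix R C 𝕜)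
    (x : EuclideanSpace 𝕜 C) (r : R) :
    (pinching φ ψ A *ᵥ x) r = (A *ᵥ x.restrictLabel ψ (φ r)) r := by
  simp only [mulVec, dotProduct, pinching, of_apply, EuclideanSpace.restrictLabel]
  refine Finset.sum_congr rfl fun c _ => ?_
  by_cases h : φ r = ψ c
  · simp [h]
  · simp [h, Ne.symm h]

variable [Fintype R] [Fintype C] [DecidableEq C]

theorem sum_norm_sq_mulVec_le (A : Matrix R C 𝕜) (x : EuclideanSpace 𝕜 C) :
    ∑ r, ‖(A *ᵥ x) r‖ ^ 2 ≤ ‖A‖ ^ 2 * ‖x‖ ^ 2 := by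
  rw [← mul_pow]
  simpa [EuclideanSpace.norm_sq_eq] using
    pow_le_pow_left₀ (norm_nonneg _) (A.l2_opNorm_mulVec x) 2

theorem l2_opNorm_pinching_le [Fintype ι] (φ : R → ι) (ψ : C → ι) (A : Matrix R C 𝕜) :
    ‖pinching φ ψ A‖ ≤ ‖A‖ := by
  rw [l2_opNorm_def]
  refine ContinuousLinearMap.opNorm_le_bound _ (norm_nonneg _) fun x => ?_
  refine (sq_le_sq₀ (norm_nonneg _) (by positivity)).mp ?_
  calc _ = ∑ r, ‖(A *ᵥ x.restrictLabel ψ (φ r)) r‖ ^ 2 := by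
        simp [EuclideanSpace.norm_sq_eq, pinching_mulVec_apply]
    _ = ∑ i, ∑ r with φ r = i, ‖(A *ᵥ x.restrictLabel ψ i) r‖ ^ 2 := by
        simp only [Finset.sum_filter]
        rw [Finset.sum_comm]
        simp
    _ ≤ ∑ i, ‖A‖ ^ 2 * ‖x.restrictLabel ψ i‖ ^ 2 := by
        gcongr with i
        exact (Finset.sum_le_sum_of_subset_of_nonneg (Finset.filter_subset _ _)
          fun _ _ _ => by positivity).trans (A.sum_norm_sq_mulVec_le _)
    _ = (‖A‖ * ‖x‖) ^ 2 := by
        rw [← Finset.mul_sum, x.sum_norm_sq_restrictLabel, mul_pow]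

theorem l2_opNorm_sub_pinching_le [Fintype ι] (φ : R → ι) (ψ : C → ι) (A : Matrix R C 𝕜) :
    ‖A - pinching φ ψ A‖ ≤ 2 * ‖A‖ := by
  linarith [norm_sub_le A (pinching φ ψ A), l2_opNorm_pinching_le φ ψ A]

end Matrix

end Pinching

/-- zeroing out the entries of a real matrix `A` at the positions where
the labels `φ(r)` and `ψ(c)` coincide at most doubles the spectral norm
(the fact `γ₂(Δ_i) ≤ 2`). -/
theorem hadamard_pattern_norm_le_two_mul {R C : Type*} [Fintype R] [Fintype C]
    [DecidableEq C] (q : ℕ)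
    (A B : Matrix R C ℝ) (φ : R → Fin q) (ψ : C → Fin q)
    (hB : ∀ r c, B r c = if φ r = ψ c then 0 else A r c) :
    specNorm B ≤ 2 * specNorm A := by
  obtain rfl : B = A - A.pinching φ ψ := by
    ext r c
    by_cases h : φ r = ψ c <;> simp [hB, Matrix.pinching, h]
  rw [specNorm_eq_l2_opNorm, specNorm_eq_l2_opNorm]
  exact A.l2_opNorm_sub_pinching_le φ ψ
end

section
/- Let q ≥ 2, let X = [q], let 0 ≤ d ≤ k−1, let T ⊆ X^k be a d-(X,k,1) orthogonal array, and fix an orthonormal basis e_0, …, e_{q−1} of ℝ^q with e_0 = (1,…,1)/√q. Fix a subset L ⊆ [k] with |L| = k−d. For each tuple u = (u_1,…,u_k) ∈ {0,…,q−1}^k with u_i = 0 for all i ∈ L, let u^L ∈ ℝ^T be q^{(k−d)/2} times the restriction of the vector e_{u_1}⊗⋯⊗e_{u_k} ∈ (ℝ^q)^{⊗k} to the coordinates indexed by T. Then the family of vectors { u^L : u ∈ {0,…,q−1}^k, u_L = 0 } is an orthonormal family in ℝ^T. -/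
open scoped BigOperators

/-!
On `L` every factor `e_{u_i}(t_i) e_{u'_i}(t_i)` equals `e_0(t_i)^2 = 1/q`, which cancels the
normalisation `q^{k-d}`; each summand is then a product over the `d` coordinates of `D = Lᶜ`.
Restriction to `D` maps `T` bijectively onto `X^D`, so the sum over `T` of such a product
factorises as `∏_{i ∈ D} ⟨e_{u_i}, e_{u'_i}⟩`, and `u, u'` agree off `D`.
-/

open Finset

namespace IsOA

variable {X ι : Type*} [Fintype X] [Fintype ι] [DecidableEq ι] {d : ℕ} {T : Finset (ι → X)}
  {D : Finset ι}

theorem bijective_restrict (hT : IsOA d T) (hD : D.card = d) :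
    Function.Bijective fun (t : T) (i : D) => (t : ι → X) i := by
  refine (Fintype.bijective_iff_injective_and_card _).mpr ⟨?_, by simp [hT.1, hD]⟩
  rintro ⟨t, ht⟩ ⟨t', ht'⟩ h
  exact Subtype.ext <| (hT.2 D hD t).unique ⟨ht, fun _ _ => rfl⟩
    ⟨ht', fun i hi => (congrFun h ⟨i, hi⟩).symm⟩

theorem sum_prod_eq_prod_sum {R : Type*} [CommSemiring R] (hT : IsOA d T) (hD : D.card = d)
    (g : ι → X → R) : ∑ t ∈ T, ∏ i ∈ D, g i (t i) = ∏ i ∈ D, ∑ x, g i x := calc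
  ∑ t ∈ T, ∏ i ∈ D, g i (t i) = ∑ t : T, ∏ i : D, g i ((t : ι → X) i) := by
    rw [← sum_coe_sort]
    exact sum_congr rfl fun t _ => (prod_coe_sort D _).symm
  _ = ∑ y : D → X, ∏ i : D, g i (y i) :=
    (hT.bijective_restrict hD).sum_comp fun y => ∏ i : D, g i (y i)
  _ = ∏ i ∈ D, ∑ x, g i x := by
    rw [← Fintype.prod_sum]
    exact prod_coe_sort D fun i => ∑ x, g i x

end IsOA

theorem prod_ite_eq_ite_eq_of_forall_notMem {ι α R : Type*} [Fintype ι] [DecidableEq α]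
    [CommMonoidWithZero R] {D : Finset ι} {u u' : ι → α} (h : ∀ i ∉ D, u i = u' i) :
    ∏ i ∈ D, (if u i = u' i then 1 else 0 : R) = if u = u' then 1 else 0 := by
  rw [prod_boole]
  congr 1
  exact propext ⟨fun hD => funext fun i => (em (i ∈ D)).elim (hD i) (h i),
    fun huu i _ => congrFun huu i⟩

theorem restricted_tensors_orthonormal_general (q k d : ℕ) [NeZero q]
    (hd : d + 1 ≤ k)
    (T : Finset (Fin k → Fin q)) (hT : IsOA d T)
    (e : Fin q → Fin q → ℝ)
    (he : ∀ i j : Fin q, ∑ x, e i x * e j x = if i = j then 1 else 0)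
    (he0 : ∀ x : Fin q, e 0 x = 1 / Real.sqrt q)
    (L : Finset (Fin k)) (hL : L.card = k - d) :
    ∀ u u' : Fin k → Fin q, (∀ i ∈ L, u i = 0) → (∀ i ∈ L, u' i = 0) →
      (∑ t : ↥T,
          (Real.sqrt ((q : ℝ) ^ (k - d)) * ∏ i, e (u i) ((t : Fin k → Fin q) i)) *
          (Real.sqrt ((q : ℝ) ^ (k - d)) * ∏ i, e (u' i) ((t : Fin k → Fin q) i))) =
        if u = u' then 1 else 0 := by
  intro u u' hu hu'
  have hD : Lᶜ.card = d := by rw [card_compl, Fintype.card_fin]; omega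
  have he0_sq : ∀ x, e 0 x * e 0 x = (q : ℝ)⁻¹ := fun x => by
    rw [he0, ← sq, div_pow, Real.sq_sqrt (Nat.cast_nonneg q), one_pow, one_div]
  have hsummand : ∀ t : Fin k → Fin q,
      (Real.sqrt ((q : ℝ) ^ (k - d)) * ∏ i, e (u i) (t i)) *
        (Real.sqrt ((q : ℝ) ^ (k - d)) * ∏ i, e (u' i) (t i)) =
      ∏ i ∈ Lᶜ, e (u i) (t i) * e (u' i) (t i) := fun t => by
    have hL_factor : ∏ i ∈ L, e (u i) (t i) * e (u' i) (t i) = ((q : ℝ) ^ (k - d))⁻¹ := by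
      rw [prod_congr rfl fun i hi => by rw [hu i hi, hu' i hi, he0_sq], prod_const, hL, inv_pow]
    rw [mul_mul_mul_comm, Real.mul_self_sqrt (by positivity), ← prod_mul_distrib,
      ← prod_mul_prod_compl L, hL_factor, mul_inv_cancel_left₀ (by simp [NeZero.ne q])]
  calc _ = ∑ t ∈ T, ∏ i ∈ Lᶜ, e (u i) (t i) * e (u' i) (t i) :=
        (sum_coe_sort T _).trans (sum_congr rfl fun t _ => hsummand t)
    _ = ∏ i ∈ Lᶜ, if u i = u' i then 1 else 0 :=
        (hT.sum_prod_eq_prod_sum hD fun i x => e (u i) x * e (u' i) x).trans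
          (prod_congr rfl fun i _ => he (u i) (u' i))
    _ = if u = u' then 1 else 0 :=
        prod_ite_eq_ite_eq_of_forall_notMem fun i hi => by
          rw [hu i (notMem_compl.mp hi), hu' i (notMem_compl.mp hi)]

/-- for a `d`-`([q],k,1)` orthogonal array `T`, an orthonormal basis
`e_0, …, e_{q-1}` of `ℝ^q` with `e_0 = (1,…,1)/√q`, and a subset `L ⊆ [k]` with
`|L| = k - d`, the vectors `u^L = q^{(k-d)/2} · (e_{u_1} ⊗ ⋯ ⊗ e_{u_k})|_T`, for tuples
`u` vanishing on `L`, form an orthonormal family in `ℝ^T`:  pairwise inner products are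
`1` for equal tuples and `0` for distinct ones. -/
theorem restricted_tensors_orthonormal (q k d : ℕ) [NeZero q] (hq : 2 ≤ q)
    (hd : d + 1 ≤ k)
    (T : Finset (Fin k → Fin q)) (hT : IsOA d T)
    (e : Fin q → Fin q → ℝ)
    (he : ∀ i j : Fin q, ∑ x, e i x * e j x = if i = j then 1 else 0)
    (he0 : ∀ x : Fin q, e 0 x = 1 / Real.sqrt q)
    (L : Finset (Fin k)) (hL : L.card = k - d) :
    ∀ u u' : Fin k → Fin q, (∀ i ∈ L, u i = 0) → (∀ i ∈ L, u' i = 0) →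
      (∑ t : ↥T,
          (Real.sqrt ((q : ℝ) ^ (k - d)) * ∏ i, e (u i) ((t : Fin k → Fin q) i)) *
          (Real.sqrt ((q : ℝ) ^ (k - d)) * ∏ i, e (u' i) ((t : Fin k → Fin q) i))) =
        if u = u' then 1 else 0 :=
  restricted_tensors_orthonormal_general q k d hd T hT e he he0 L hL
end
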